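/- Let G be a group with trivial center and suppose that Inn(G) has a group complement in Aut(G), i.e. there is a subgroup H ≤ Aut(G) with H ∩ Inn(G) = {1} and such that every automorphism of G can be written as a product of an element of H and an inner automorphism. Then for every group Ḡ containing G as a normal subgroup of index 2, there exists y ∈ Ḡ with y ∉ G and y² = 1. In particular, every extension of G by the cyclic group of order 2 splits. -/

import Mathlib

/-!
Conjugation makes `Ḡ` act on `G` by automorphisms. For `x ∉ G`, write its action as `h ∘ conj g`
with `h` in the complement `H`; then `y = x g⁻¹ ∉ G` acts as `h`. Since `y² = z ∈ G` acts as both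
`h²` and `conj z`, the trivial intersection gives `conj z = 1`, and the trivial center gives
`y² = z = 1`.
-/

theorem MulAut.ker_conj (G : Type*) [Group G] :
    (MulAut.conj : G →* MulAut G).ker = Subgroup.center G := by
  ext z
  simp only [MonoidHom.mem_ker, Subgroup.mem_center_iff, MulEquiv.ext_iff, MulAut.conj_apply,
    MulAut.one_apply]
  exact forall_congr' fun g => by rw [mul_inv_eq_iff_eq_mul, eq_comm]

noncomputable def MonoidHom.toGroupExtension {G E : Type*} [Group G] [Group E] (ι : G →* E)
    (hι : Function.Injective ι) [ι.range.Normal] : GroupExtension G E (E ⧸ ι.range) where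
  inl := ι
  rightHom := QuotientGroup.mk' ι.range
  inl_injective := hι
  range_inl_eq_ker_rightHom := (QuotientGroup.ker_mk' _).symm
  rightHom_surjective := QuotientGroup.mk'_surjective _

namespace GroupExtension

variable {N E Q : Type*} [Group N] [Group E] [Group Q] (S : GroupExtension N E Q)

theorem conjAct_inl (n : N) : S.conjAct (S.inl n) = MulAut.conj n := by
  ext m
  apply S.inl_injective
  simp [inl_conjAct_comm]

theorem sq_eq_one_of_conjAct_mem (hcenter : Subgroup.center N = ⊥) {H : Subgroup (MulAut N)}
    (hinter : H ⊓ (MulAut.conj : N →* MulAut N).range = ⊥) {y : E} (hyH : S.conjAct y ∈ H)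
    (hy2 : y ^ 2 ∈ S.inl.range) : y ^ 2 = 1 := by
  obtain ⟨z, hz⟩ := hy2
  have hconj : MulAut.conj z ∈ H ⊓ (MulAut.conj : N →* MulAut N).range :=
    ⟨by rw [← S.conjAct_inl, hz, map_pow]; exact pow_mem hyH 2, z, rfl⟩
  rw [hinter, Subgroup.mem_bot, ← MonoidHom.mem_ker, MulAut.ker_conj, hcenter,
    Subgroup.mem_bot] at hconj
  rw [← hz, hconj, map_one]

theorem exists_rightHom_eq_and_sq_eq_one (hcenter : Subgroup.center N = ⊥)
    {H : Subgroup (MulAut N)} (hinter : H ⊓ (MulAut.conj : N →* MulAut N).range = ⊥)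
    (hcompl : ∀ ψ : MulAut N, ∃ h ∈ H, ∃ n : N, ψ = h * MulAut.conj n)
    {x : E} (hx : S.rightHom x ^ 2 = 1) : ∃ y, S.rightHom y = S.rightHom x ∧ y ^ 2 = 1 := by
  obtain ⟨h, hH, n, hn⟩ := hcompl (S.conjAct x)
  refine ⟨x * (S.inl n)⁻¹, by simp, S.sq_eq_one_of_conjAct_mem hcenter hinter ?_ ?_⟩
  · simpa [conjAct_inl, hn] using hH
  · rw [S.range_inl_eq_ker_rightHom, MonoidHom.mem_ker]
    simpa using hx

end GroupExtension

/-- If `G` has trivial center and `Inn(G)` has a group complement in `Aut(G)`,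
then every extension of `G` by `C₂` splits: any group containing `G` as an
index-2 normal subgroup contains an element `y ∉ G` with `y² = 1`. -/
theorem stmt_11 {G : Type*} [Group G]
    (hcenter : Subgroup.center G = ⊥)
    (H : Subgroup (MulAut G))
    (hinter : H ⊓ (MulAut.conj : G →* MulAut G).range = ⊥)
    (hcompl : ∀ ψ : MulAut G, ∃ h ∈ H, ∃ g : G, ψ = h * MulAut.conj g) :
    ∀ (Gb : Type*) [Group Gb] (ι : G →* Gb),
      Function.Injective ι → ι.range.Normal → ι.range.index = 2 →
      ∃ y : Gb, y ∉ ι.range ∧ y ^ 2 = 1 := by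
  intro Gb _ ι hinj _ hidx
  let S := ι.toGroupExtension hinj
  have hrange : ∀ z, z ∈ ι.range ↔ S.rightHom z = 1 := fun z => (QuotientGroup.eq_one_iff z).symm
  obtain ⟨x, hx⟩ := SetLike.exists_not_mem_of_ne_top ι.range fun htop => by simp [htop] at hidx
  obtain ⟨y, hyx, hy⟩ := S.exists_rightHom_eq_and_sq_eq_one hcenter hinter hcompl
    ((hrange _).1 (Subgroup.sq_mem_of_index_two hidx x))
  exact ⟨y, by rwa [hrange, hyx, ← hrange], hy⟩
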